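/- arXiv:1903.04973 — 2 statements merged into one kernel-verified Lean document; each statement's English description precedes it below -/
import Mathlib

section
/- Cayley's formula: For every positive integer n, the number of spanning trees in the complete graph K_n on n vertices is n^{n-2}, i.e., τ(K_n) = n^{n-2}. -/
/-!
Prüfer's bijection. Order the vertices linearly. A word `a :: L` over a vertex set `s` decodes
to a tree on `s`: the least vertex `ℓ` of `s` missing from the word becomes a leaf hanging from
`a`, and the rest of the tree is decoded from `L` on `s \ {ℓ}`. By induction, the leaves of the
decoded tree are exactly the vertices missing from the word. Hence the least leaf `ℓ` of any tree
and its neighbour `a` can be read off, which makes decoding injective, and removing `ℓ` and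
decoding the rest shows that it is surjective. So trees on `n ≥ 2` vertices correspond to the
`n ^ (n - 2)` words of length `n - 2`.
-/

/-- The number of spanning trees of a simple graph `G`: the number of subgraphs of `G`
that contain every vertex and are trees (connected and acyclic). -/
noncomputable def spanningTreeCount {V : Type*} (G : SimpleGraph V) : ℕ :=
  Nat.card {T : G.Subgraph // T.IsSpanning ∧ T.coe.IsTree}

open Finset

namespace SimpleGraph

variable {V : Type*}

def spanningTreesEquiv (G : SimpleGraph V) :
    {T : G.Subgraph // T.IsSpanning ∧ T.coe.IsTree} ≃
      {T : SimpleGraph V // T ≤ G ∧ T.IsTree} where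
  toFun T := ⟨T.1.spanningCoe, T.1.spanningCoe_le,
    (T.1.spanningCoeEquivCoeOfSpanning T.2.1).isTree_iff.2 T.2.2⟩
  invFun T := ⟨toSubgraph T.1 T.2.1, toSubgraph.isSpanning _ _,
    ((toSubgraph T.1 T.2.1).spanningCoeEquivCoeOfSpanning (toSubgraph.isSpanning _ _)).isTree_iff.1
      T.2.2⟩
  left_inv T := Subtype.ext (Subgraph.ext T.2.1.verts_eq_univ.symm rfl)
  right_inv _ := rfl

theorem spanningTreeCount_eq (G : SimpleGraph V) :
    spanningTreeCount G = Nat.card {T : SimpleGraph V // T ≤ G ∧ T.IsTree} :=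
  Nat.card_congr G.spanningTreesEquiv

variable {G : SimpleGraph V} {ℓ a : V}

lemma adj_of_neighborSet_eq_singleton (h : G.neighborSet ℓ = {a}) : G.Adj ℓ a := by
  rw [← mem_neighborSet, h]
  rfl

lemma exists_neighborSet_eq_singleton_iff {v : V} [Fintype (G.neighborSet v)] :
    (∃ a, G.neighborSet v = {a}) ↔ G.degree v = 1 := by
  rw [← card_neighborSet_eq_degree, ← Nat.card_eq_fintype_card, Nat.card_coe_set_eq,
    Set.ncard_eq_one]

lemma neighborSet_sup_edge_left (hℓ : ℓ ∉ G.support) (hla : ℓ ≠ a) :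
    (G ⊔ edge ℓ a).neighborSet ℓ = {a} := by
  ext v
  simp only [neighborSet_sup, Set.mem_union, mem_neighborSet, edge_adj, Set.mem_singleton_iff]
  have : ¬ G.Adj ℓ v := fun h => hℓ ⟨v, h⟩
  grind

lemma neighborSet_sup_edge_right (hla : ℓ ≠ a) :
    (G ⊔ edge ℓ a).neighborSet a = insert ℓ (G.neighborSet a) := by
  ext v
  simp only [neighborSet_sup, Set.mem_union, mem_neighborSet, edge_adj, Set.mem_insert_iff]
  grind

lemma neighborSet_sup_edge_of_ne {v : V} (hvℓ : v ≠ ℓ) (hva : v ≠ a) :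
    (G ⊔ edge ℓ a).neighborSet v = G.neighborSet v := by
  ext w
  simp only [neighborSet_sup, Set.mem_union, mem_neighborSet, edge_adj]
  grind

lemma deleteIncidenceSet_sup_edge (hℓ : ℓ ∉ G.support) :
    (G ⊔ edge ℓ a).deleteIncidenceSet ℓ = G := by
  ext u v
  simp only [deleteIncidenceSet_adj, sup_adj, edge_adj]
  have hu : G.Adj u v → u ≠ ℓ := fun h hu => hℓ ⟨v, hu ▸ h⟩
  have hv : G.Adj u v → v ≠ ℓ := fun h hv => hℓ ⟨u, hv ▸ h.symm⟩
  grind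

lemma deleteIncidenceSet_sup_edge_eq_self (h : G.neighborSet ℓ = {a}) :
    G.deleteIncidenceSet ℓ ⊔ edge ℓ a = G := by
  have hnb : ∀ v, G.Adj ℓ v ↔ v = a := fun v => by
    rw [← mem_neighborSet, h, Set.mem_singleton_iff]
  ext u v
  simp only [deleteIncidenceSet_adj, sup_adj, edge_adj]
  have := hnb u
  have := hnb v
  have := G.adj_comm u v
  have : ¬ G.Adj ℓ ℓ := G.irrefl
  grind

lemma ncard_edgeSet_sup_edge (hfin : G.edgeSet.Finite) (hℓ : ℓ ∉ G.support)
    (hla : ℓ ≠ a) : (G ⊔ edge ℓ a).edgeSet.ncard = G.edgeSet.ncard + 1 := by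
  rw [edgeSet_sup, edgeSet_edge_of_ne hla, Set.union_singleton,
    Set.ncard_insert_of_notMem _ hfin]
  exact fun h => hℓ ⟨a, h⟩

lemma ncard_edgeSet_deleteIncidenceSet (hfin : G.edgeSet.Finite) (h : G.neighborSet ℓ = {a}) :
    (G.deleteIncidenceSet ℓ).edgeSet.ncard + 1 = G.edgeSet.ncard := by
  have hmem : s(ℓ, a) ∈ G.edgeSet := adj_of_neighborSet_eq_singleton h
  have hinc : G.incidenceSet ℓ = {s(ℓ, a)} := by
    refine Set.eq_singleton_iff_unique_mem.2 ⟨⟨hmem, Sym2.mem_mk_left _ _⟩, ?_⟩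
    rintro e ⟨he, hℓe⟩
    obtain ⟨w, rfl⟩ := Sym2.mem_iff_exists.1 hℓe
    have hw : w ∈ G.neighborSet ℓ := he
    rw [h, Set.mem_singleton_iff] at hw
    rw [hw]
  rw [edgeSet_deleteIncidenceSet, hinc, Set.ncard_sdiff_singleton_add_one hmem hfin]

lemma reachable_deleteIncidenceSet_of_neighborSet_eq_singleton (h : G.neighborSet ℓ = {a})
    {u v : V} (hu : u ≠ ℓ) (hv : v ≠ ℓ) (huv : G.Reachable u v) :
    (G.deleteIncidenceSet ℓ).Reachable u v := by
  classical
  -- walks of `G` map to walks avoiding `ℓ` once `ℓ` is replaced by its only neighbour `a`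
  let f : V → V := fun x => if x = ℓ then a else x
  have hstep : ∀ {x y}, G.Adj x y → (G.deleteIncidenceSet ℓ).Reachable (f x) (f y) := by
    intro x y hxy
    have hnb : ∀ {z}, G.Adj ℓ z → z = a := fun {z} hz => by
      simpa [h] using (show z ∈ G.neighborSet ℓ from hz)
    by_cases hx : x = ℓ
    · subst hx; simp [f, hnb hxy]
    by_cases hy : y = ℓ
    · subst hy; simp [f, hnb hxy.symm]
    · simpa [f, hx, hy] using (deleteIncidenceSet_adj.2 ⟨hxy, hx, hy⟩).reachable
  obtain ⟨p⟩ := huv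
  have : (G.deleteIncidenceSet ℓ).Reachable (f u) (f v) := by
    clear hu hv
    induction p with
    | nil => rfl
    | cons hxy _ ih => exact (hstep hxy).trans ih
  simpa [f, hu, hv] using this

/-- Connectedness together with `#s - 1` edges characterises trees
(`isTree_iff_connected_and_card`), so acyclicity need not be carried along. -/
structure IsTreeOn (G : SimpleGraph V) (s : Finset V) : Prop where
  support_subset : G.support ⊆ s
  reachable : ∀ u ∈ s, ∀ v ∈ s, G.Reachable u v
  ncard_edgeSet_add_one : G.edgeSet.ncard + 1 = #s

open Classical in
noncomputable def leaves (G : SimpleGraph V) (s : Finset V) : Finset V :=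
  {v ∈ s | ∃ a, G.neighborSet v = {a}}

lemma mem_leaves {s : Finset V} {v : V} :
    v ∈ G.leaves s ↔ v ∈ s ∧ ∃ a, G.neighborSet v = {a} := by
  classical
  simp [leaves]

lemma isTreeOn_bot_singleton (v : V) : (⊥ : SimpleGraph V).IsTreeOn {v} where
  support_subset := by simp
  reachable := by simp
  ncard_edgeSet_add_one := by simp

lemma isTreeOn_univ_iff [Fintype V] [Nonempty V] : G.IsTreeOn univ ↔ G.IsTree := by
  rw [isTree_iff_connected_and_card, connected_iff, Nat.card_coe_set_eq, Nat.card_eq_fintype_card,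
    ← card_univ]
  exact ⟨fun hT => ⟨⟨fun u v => hT.reachable u (mem_univ u) v (mem_univ v), inferInstance⟩,
      hT.ncard_edgeSet_add_one⟩,
    fun ⟨⟨hG, _⟩, hcard⟩ => ⟨by simp, fun u _ v _ => hG u v, hcard⟩⟩

namespace IsTreeOn

variable {s : Finset V} {v : V}

lemma finite_edgeSet (hT : G.IsTreeOn s) : G.edgeSet.Finite := by
  refine s.sym2.finite_toSet.subset fun e he => ?_
  induction e with
  | _ x y =>
    exact mk_mem_sym2_iff.2 ⟨hT.support_subset ⟨y, he⟩, hT.support_subset ⟨x, he.symm⟩⟩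

lemma neighborSet_nonempty (hT : G.IsTreeOn s) (hs : 2 ≤ #s) (hv : v ∈ s) :
    (G.neighborSet v).Nonempty := by
  obtain ⟨u, hu, hne⟩ := s.exists_mem_ne hs v
  obtain ⟨p⟩ := hT.reachable v hv u hu
  cases p with
  | nil => exact absurd rfl hne
  | cons h _ => exact ⟨_, h⟩

lemma sum_degree [Fintype V] [DecidableRel G.Adj] (hT : G.IsTreeOn s) :
    ∑ v ∈ s, G.degree v = 2 * (#s - 1) := by
  have hout : ∀ v ∉ s, G.degree v = 0 := fun v hv =>
    (G.degree_eq_zero_iff_notMem_support v).2 fun h => hv (hT.support_subset h)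
  rw [sum_subset (subset_univ s) fun v _ hv => hout v hv, sum_degrees_eq_twice_card_edges,
    ← hT.ncard_edgeSet_add_one, Set.ncard_eq_toFinset_card' G.edgeSet, edgeFinset]
  simp

lemma leaves_nonempty [Finite V] (hT : G.IsTreeOn s) (hs : 2 ≤ #s) : (G.leaves s).Nonempty := by
  classical
  have := Fintype.ofFinite V
  by_contra hempty
  have hdeg : ∀ v ∈ s, 2 ≤ G.degree v := by
    intro v hv
    have hpos : 0 < G.degree v := by
      rw [← card_neighborSet_eq_degree, Fintype.card_pos_iff]
      exact (hT.neighborSet_nonempty hs hv).to_subtype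
    have hne : G.degree v ≠ 1 := fun h1 =>
      hempty ⟨v, mem_leaves.2 ⟨hv, exists_neighborSet_eq_singleton_iff.2 h1⟩⟩
    omega
  have := sum_le_sum hdeg
  rw [hT.sum_degree, sum_const, smul_eq_mul] at this
  omega

variable [DecidableEq V]

lemma sup_edge (hT : G.IsTreeOn s) (ha : a ∈ s) (hℓ : ℓ ∉ s) :
    (G ⊔ edge ℓ a).IsTreeOn (insert ℓ s) := by
  have hℓG : ℓ ∉ G.support := fun h => hℓ (hT.support_subset h)
  have hla : ℓ ≠ a := by rintro rfl; exact hℓ ha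
  have hreach : ∀ v ∈ s, (G ⊔ edge ℓ a).Reachable ℓ v := fun v hv =>
    (Adj.reachable (by simp [edge_adj, hla])).trans ((hT.reachable a ha v hv).mono le_sup_left)
  refine ⟨?_, ?_, ?_⟩
  · rintro u ⟨v, huv | huv⟩
    · exact mem_insert_of_mem (hT.support_subset ⟨v, huv⟩)
    · rw [edge_adj] at huv
      rcases huv with ⟨⟨rfl, -⟩ | ⟨rfl, -⟩, -⟩
      · exact mem_insert_self _ _
      · exact mem_insert_of_mem ha
  · intro u hu v hv
    rw [mem_insert] at hu hv
    rcases hu with rfl | hu <;> rcases hv with rfl | hv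
    · rfl
    · exact hreach v hv
    · exact (hreach u hu).symm
    · exact (hT.reachable u hu v hv).mono le_sup_left
  · rw [ncard_edgeSet_sup_edge hT.finite_edgeSet hℓG hla, card_insert_of_notMem hℓ,
      hT.ncard_edgeSet_add_one]

lemma deleteIncidenceSet (hT : G.IsTreeOn s) (h : G.neighborSet ℓ = {a}) :
    (G.deleteIncidenceSet ℓ).IsTreeOn (s.erase ℓ) := by
  have hℓs : ℓ ∈ s := hT.support_subset ⟨a, adj_of_neighborSet_eq_singleton h⟩
  refine ⟨?_, ?_, ?_⟩
  · rintro u ⟨v, huv⟩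
    exact mem_erase.2 ⟨(deleteIncidenceSet_adj.1 huv).2.1, hT.support_subset ⟨v, huv.1⟩⟩
  · intro u hu v hv
    rw [mem_erase] at hu hv
    exact reachable_deleteIncidenceSet_of_neighborSet_eq_singleton h hu.1 hv.1
      (hT.reachable u hu.2 v hv.2)
  · have := ncard_edgeSet_deleteIncidenceSet hT.finite_edgeSet h
    have := hT.ncard_edgeSet_add_one
    rw [card_erase_of_mem hℓs]
    omega

lemma leaves_sup_edge (hT : G.IsTreeOn s) (hs : 2 ≤ #s) (ha : a ∈ s) (hℓ : ℓ ∉ s) :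
    (G ⊔ edge ℓ a).leaves (insert ℓ s) = insert ℓ ((G.leaves s).erase a) := by
  have hℓG : ℓ ∉ G.support := fun h => hℓ (hT.support_subset h)
  have hla : ℓ ≠ a := by rintro rfl; exact hℓ ha
  ext v
  simp only [mem_insert, mem_erase, mem_leaves]
  by_cases hvℓ : v = ℓ
  · subst hvℓ
    simp [neighborSet_sup_edge_left hℓG hla]
  by_cases hva : v = a
  · subst hva
    rw [neighborSet_sup_edge_right hla]
    have hne := hT.neighborSet_nonempty hs ha
    have hℓN : ℓ ∉ G.neighborSet v := fun h => hℓG ⟨v, h.symm⟩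
    simp only [hvℓ, ne_eq, not_true_eq_false, false_and, or_false, false_or, iff_false, not_and,
      not_exists]
    intro _ b hb
    obtain ⟨w, hw⟩ := hne
    have hℓb : ℓ = b := hb.subset (Set.mem_insert ℓ _)
    have hwb : w = b := hb.subset (Set.mem_insert_of_mem ℓ hw)
    exact hℓN (hℓb ▸ hwb ▸ hw)
  · simp [hvℓ, hva, neighborSet_sup_edge_of_ne hvℓ hva]

lemma eq_edge {u v : V} (hT : G.IsTreeOn {u, v}) (huv : u ≠ v) : G = edge u v := by
  have hsub : G.edgeSet ⊆ {s(u, v)} := by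
    intro e he
    induction e with
    | _ x y =>
      have hx : x ∈ ({u, v} : Finset V) := hT.support_subset ⟨y, he⟩
      have hy : y ∈ ({u, v} : Finset V) := hT.support_subset ⟨x, he.symm⟩
      have hxy : x ≠ y := G.ne_of_adj he
      simp only [mem_insert, mem_singleton] at hx hy
      simp only [Set.mem_singleton_iff, Sym2.eq_iff]
      grind
  have hcard : G.edgeSet.ncard = 1 := by
    have := hT.ncard_edgeSet_add_one
    rw [card_pair huv] at this
    omega
  rw [← edgeSet_inj, edgeSet_edge_of_ne huv]
  exact Set.eq_of_subset_of_ncard_le hsub (by simp [hcard])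

end IsTreeOn

section Prufer

variable [LinearOrder V]

/-- For `#s = 2` the base case is the single edge between the two vertices of `s`. -/
noncomputable def pruferDecode : Finset V → List V → SimpleGraph V
  | s, [] => fromRel fun u v => u ∈ s ∧ v ∈ s
  | s, a :: L =>
    if h : (s \ (a :: L).toFinset).Nonempty then
      let ℓ := (s \ (a :: L).toFinset).min' h
      pruferDecode (s.erase ℓ) L ⊔ edge ℓ a
    else ⊥

variable {s : Finset V} {L : List V}

lemma pruferDecode_pair {u v : V} : pruferDecode {u, v} [] = edge u v := by
  ext x y
  simp only [pruferDecode, fromRel_adj, edge_adj, mem_insert, mem_singleton]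
  grind

lemma pruferDecode_cons (hℓ : IsLeast (↑(s \ (a :: L).toFinset) : Set V) ℓ) :
    pruferDecode s (a :: L) = pruferDecode (s.erase ℓ) L ⊔ edge ℓ a := by
  have h : (s \ (a :: L).toFinset).Nonempty := ⟨ℓ, hℓ.1⟩
  rw [pruferDecode, dif_pos h, ((s \ (a :: L).toFinset).isLeast_min' h).unique hℓ]

lemma mem_and_notMem_of_isLeast (hℓ : IsLeast (↑(s \ L.toFinset) : Set V) ℓ) :
    ℓ ∈ s ∧ ℓ ∉ L := by
  simpa using hℓ.1

structure IsPruferCode (s : Finset V) (L : List V) : Prop where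
  length_add_two : L.length + 2 = #s
  mem : ∀ x ∈ L, x ∈ s

namespace IsPruferCode

lemma exists_isLeast (hL : IsPruferCode s (a :: L)) :
    ∃ ℓ, IsLeast (↑(s \ (a :: L).toFinset) : Set V) ℓ := by
  have h : (s \ (a :: L).toFinset).Nonempty := by
    rw [sdiff_nonempty]
    intro hsub
    have := (card_le_card hsub).trans (a :: L).toFinset_card_le
    have := hL.length_add_two
    rw [List.length_cons] at *
    omega
  exact ⟨_, (s \ (a :: L).toFinset).isLeast_min' h⟩

lemma head_mem_erase (hL : IsPruferCode s (a :: L))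
    (hℓ : IsLeast (↑(s \ (a :: L).toFinset) : Set V) ℓ) : a ∈ s.erase ℓ := by
  have hℓa : ℓ ≠ a := fun h => (mem_and_notMem_of_isLeast hℓ).2 (h ▸ List.mem_cons_self)
  exact mem_erase.2 ⟨hℓa.symm, hL.mem a List.mem_cons_self⟩

lemma tail (hL : IsPruferCode s (a :: L))
    (hℓ : IsLeast (↑(s \ (a :: L).toFinset) : Set V) ℓ) : IsPruferCode (s.erase ℓ) L := by
  obtain ⟨hℓs, hℓL⟩ := mem_and_notMem_of_isLeast hℓ
  refine ⟨?_, fun x hx => mem_erase.2 ⟨?_, hL.mem x (List.mem_cons_of_mem a hx)⟩⟩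
  · have := hL.length_add_two
    rw [card_erase_of_mem hℓs]
    rw [List.length_cons] at this
    omega
  · rintro rfl
    exact hℓL (List.mem_cons_of_mem a hx)

end IsPruferCode

lemma isTreeOn_pruferDecode (hL : IsPruferCode s L) : (pruferDecode s L).IsTreeOn s := by
  induction L generalizing s with
  | nil =>
    obtain ⟨u, v, huv, rfl⟩ := card_eq_two.1 hL.length_add_two.symm
    rw [pruferDecode_pair, ← bot_sup_eq (edge u v)]
    exact (isTreeOn_bot_singleton v).sup_edge (mem_singleton_self v) (by simpa using huv)
  | cons a L ih =>
    obtain ⟨ℓ, hℓ⟩ := hL.exists_isLeast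
    have hT := (ih (hL.tail hℓ)).sup_edge (hL.head_mem_erase hℓ) (notMem_erase ℓ s)
    rwa [insert_erase (mem_and_notMem_of_isLeast hℓ).1, ← pruferDecode_cons hℓ] at hT

lemma leaves_edge {u v : V} (huv : u ≠ v) : (edge u v).leaves {u, v} = {u, v} := by
  have hu : (edge u v).neighborSet u = {v} := by
    simpa using neighborSet_sup_edge_left (G := ⊥) (by simp) huv
  have hv : (edge u v).neighborSet v = {u} := by
    simpa [edge_comm] using neighborSet_sup_edge_left (G := ⊥) (by simp) huv.symm
  ext w
  simp only [mem_leaves, mem_insert, mem_singleton]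
  constructor
  · exact And.left
  · rintro (rfl | rfl)
    · exact ⟨Or.inl rfl, v, hu⟩
    · exact ⟨Or.inr rfl, u, hv⟩

lemma leaves_sup_edge_eq_sdiff (hT : G.IsTreeOn (s.erase ℓ)) (hs : 2 ≤ #(s.erase ℓ))
    (hℓs : ℓ ∈ s) (hℓL : ℓ ∉ L) (ha : a ∈ s.erase ℓ)
    (hleaves : G.leaves (s.erase ℓ) = s.erase ℓ \ L.toFinset) :
    (G ⊔ edge ℓ a).leaves s = s \ (a :: L).toFinset := by
  have := hT.leaves_sup_edge hs ha (notMem_erase ℓ s)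
  rw [insert_erase hℓs, hleaves] at this
  rw [this]
  have hℓa : ℓ ≠ a := (ne_of_mem_erase ha).symm
  ext v
  simp only [mem_insert, mem_erase, mem_sdiff, List.mem_toFinset, List.mem_cons]
  grind

lemma leaves_pruferDecode (hL : IsPruferCode s L) :
    (pruferDecode s L).leaves s = s \ L.toFinset := by
  induction L generalizing s with
  | nil =>
    obtain ⟨u, v, huv, rfl⟩ := card_eq_two.1 hL.length_add_two.symm
    simp [pruferDecode_pair, leaves_edge huv]
  | cons a L ih =>
    obtain ⟨ℓ, hℓ⟩ := hL.exists_isLeast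
    obtain ⟨hℓs, hℓL⟩ := mem_and_notMem_of_isLeast hℓ
    have hL' := hL.tail hℓ
    rw [pruferDecode_cons hℓ]
    have hs : 2 ≤ #(s.erase ℓ) := by have := hL'.length_add_two; omega
    exact leaves_sup_edge_eq_sdiff (isTreeOn_pruferDecode hL') hs hℓs
      (fun h => hℓL (List.mem_cons_of_mem a h)) (hL.head_mem_erase hℓ) (ih hL')

lemma pruferDecode_injective {M : List V} (hL : IsPruferCode s L) (hM : IsPruferCode s M)
    (h : pruferDecode s L = pruferDecode s M) : L = M := by
  induction L generalizing s M with
  | nil =>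
    cases M with
    | nil => rfl
    | cons b M => exact absurd (hL.length_add_two.trans hM.length_add_two.symm) (by simp)
  | cons a L ih =>
    cases M with
    | nil => exact absurd (hL.length_add_two.trans hM.length_add_two.symm) (by simp)
    | cons b M =>
      obtain ⟨ℓ, hℓ⟩ := hL.exists_isLeast
      have hℓ' : IsLeast (↑(s \ (b :: M).toFinset) : Set V) ℓ := by
        rwa [← leaves_pruferDecode hM, ← h, leaves_pruferDecode hL]
      have hℓG : ∀ {N}, IsPruferCode (s.erase ℓ) N →
          ℓ ∉ (pruferDecode (s.erase ℓ) N).support :=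
        fun hN hℓN => notMem_erase ℓ s ((isTreeOn_pruferDecode hN).support_subset hℓN)
      have hℓa := ne_of_mem_erase (hL.head_mem_erase hℓ)
      have hℓb := ne_of_mem_erase (hM.head_mem_erase hℓ')
      rw [pruferDecode_cons hℓ, pruferDecode_cons hℓ'] at h
      have hab : ({a} : Set V) = {b} := by
        rw [← neighborSet_sup_edge_left (hℓG (hL.tail hℓ)) hℓa.symm, h,
          neighborSet_sup_edge_left (hℓG (hM.tail hℓ')) hℓb.symm]
      obtain rfl := Set.singleton_eq_singleton_iff.1 hab
      have hdel := congrArg (deleteIncidenceSet · ℓ) h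
      simp only [deleteIncidenceSet_sup_edge (hℓG (hL.tail hℓ)),
        deleteIncidenceSet_sup_edge (hℓG (hM.tail hℓ'))] at hdel
      rw [ih (hL.tail hℓ) (hM.tail hℓ') hdel]

lemma exists_pruferDecode_eq [Finite V] (hT : G.IsTreeOn s) (hs : 2 ≤ #s) :
    ∃ L, IsPruferCode s L ∧ pruferDecode s L = G := by
  obtain ⟨n, hn⟩ : ∃ n, #s = n + 2 := ⟨#s - 2, by omega⟩
  induction n generalizing s G with
  | zero =>
    obtain ⟨u, v, huv, rfl⟩ := card_eq_two.1 hn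
    exact ⟨[], ⟨by simp [hn], by simp⟩, by rw [pruferDecode_pair, hT.eq_edge huv]⟩
  | succ n ih =>
    obtain ⟨ℓ, hℓmin⟩ : ∃ ℓ, IsLeast (G.leaves s : Set V) ℓ :=
      ⟨_, (G.leaves s).isLeast_min' (hT.leaves_nonempty hs)⟩
    obtain ⟨hℓs, a, hℓa⟩ := mem_leaves.1 hℓmin.1
    have hT' := hT.deleteIncidenceSet hℓa
    have hcard : #(s.erase ℓ) = n + 2 := by rw [card_erase_of_mem hℓs]; omega
    obtain ⟨L, hL, hdec⟩ := ih hT' (by omega) hcard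
    have hadj := adj_of_neighborSet_eq_singleton hℓa
    have ha : a ∈ s.erase ℓ :=
      mem_erase.2 ⟨(G.ne_of_adj hadj).symm, hT.support_subset ⟨ℓ, hadj.symm⟩⟩
    have hℓL : ℓ ∉ L := fun h => notMem_erase ℓ s (hL.mem ℓ h)
    have hleaves : G.leaves s = s \ (a :: L).toFinset := by
      rw [← deleteIncidenceSet_sup_edge_eq_self hℓa, ← hdec]
      exact leaves_sup_edge_eq_sdiff (hdec ▸ hT') (by omega) hℓs hℓL ha
        (leaves_pruferDecode hL)
    have hℓ : IsLeast (↑(s \ (a :: L).toFinset) : Set V) ℓ := hleaves ▸ hℓmin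
    refine ⟨a :: L, ⟨?_, ?_⟩, ?_⟩
    · have := hL.length_add_two
      simp only [List.length_cons]
      omega
    · intro x hx
      rcases List.mem_cons.1 hx with rfl | hx
      · exact mem_of_mem_erase ha
      · exact mem_of_mem_erase (hL.mem x hx)
    · rw [pruferDecode_cons hℓ, hdec, deleteIncidenceSet_sup_edge_eq_self hℓa]

theorem card_isTreeOn [Finite V] (hs : 2 ≤ #s) :
    Nat.card {G : SimpleGraph V // G.IsTreeOn s} = #s ^ (#s - 2) := by
  have hcode : ∀ L : List.Vector s (#s - 2), IsPruferCode s (L.toList.map (↑)) := fun L =>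
    ⟨by simp only [List.length_map, L.toList_length]; omega, by
      simp only [List.mem_map]
      rintro _ ⟨x, -, rfl⟩
      exact x.2⟩
  let f (L : List.Vector s (#s - 2)) : {G : SimpleGraph V // G.IsTreeOn s} :=
    ⟨pruferDecode s (L.toList.map (↑)), isTreeOn_pruferDecode (hcode L)⟩
  have hf : f.Bijective := by
    refine ⟨fun L M h => List.Vector.toList_injective ?_, fun ⟨G, hG⟩ => ?_⟩
    · exact List.map_injective_iff.2 Subtype.coe_injective
        (pruferDecode_injective (hcode L) (hcode M) (congrArg Subtype.val h))
    · obtain ⟨L, hL, rfl⟩ := exists_pruferDecode_eq hG hs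
      lift L to List s using hL.mem
      refine ⟨⟨L, ?_⟩, rfl⟩
      have := hL.length_add_two
      rw [List.length_map] at this
      omega
  rw [← Nat.card_congr (Equiv.ofBijective f hf), Nat.card_eq_fintype_card, card_vector,
    Fintype.card_coe]

end Prufer

theorem card_isTree [Finite V] [Nonempty V] :
    Nat.card {T : SimpleGraph V // T.IsTree} = Nat.card V ^ (Nat.card V - 2) := by
  have := Fintype.ofFinite V
  by_cases h : Nat.card V = 1
  · have : Subsingleton V := (Nat.card_eq_one_iff_unique.1 h).1
    have : Unique {T : SimpleGraph V // T.IsTree} :=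
      { default := ⟨default, IsTree.of_subsingleton⟩
        uniq := fun _ => Subtype.ext (Subsingleton.elim _ _) }
    rw [h, Nat.card_unique]
    rfl
  · have h2 : 2 ≤ #(univ : Finset V) := by
      have := Nat.card_pos (α := V)
      rw [card_univ, ← Nat.card_eq_fintype_card]
      omega
    let : LinearOrder V := LinearOrder.lift' _ (Fintype.equivFin V).injective
    rw [← Nat.card_congr (Equiv.subtypeEquivRight fun T => isTreeOn_univ_iff),
      card_isTreeOn h2, card_univ, Nat.card_eq_fintype_card]

theorem spanningTreeCount_top [Finite V] [Nonempty V] :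
    spanningTreeCount (⊤ : SimpleGraph V) = Nat.card V ^ (Nat.card V - 2) := by
  rw [spanningTreeCount_eq, ← card_isTree]
  exact Nat.card_congr (Equiv.subtypeEquivRight fun T => and_iff_right le_top)

end SimpleGraph

/-- Cayley's formula: the number of spanning trees of the complete graph on `n ≥ 1`
vertices is `n ^ (n - 2)`. -/
theorem cayley_formula (n : ℕ) (hn : 0 < n) :
    spanningTreeCount (SimpleGraph.completeGraph (Fin n)) = n ^ (n - 2) := by
  have : Nonempty (Fin n) := ⟨⟨0, hn⟩⟩
  simpa using SimpleGraph.spanningTreeCount_top (V := Fin n)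
end

section
/- Let G be a connected threshold graph on vertices v₁, ..., v_n (ordered as in the definition of a threshold graph), and let t ≤ n be the largest index such that {v_i, v_t} ∈ E(G) for all i < t. Then {v_i, v_j} ∈ E(G) for all 1 ≤ i < j ≤ t, and {v_k, v_ℓ} ∉ E(G) whenever t ≤ k < ℓ ≤ n. -/
/-!
If `t ≤ k < l` and `v_k v_l` were an edge, the threshold property would make `v_k` adjacent to
every `v_j` with `k < j ≤ l`, in particular to `v_{k+1}`, and then every `v_i` with `i < k + 1`
would be adjacent to `v_{k+1}`; maximality of `t` forces `k + 1 ≤ t`, a contradiction.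
The clique part is immediate: `v_j` with `j < t` is adjacent to `v_t`, hence to every vertex
below `v_t`.
-/

/-- A simple graph on `Fin n` is threshold-ordered (with respect to the natural order of
its vertices `v₁, …, v_n`) if whenever `{v_k, v_ℓ} ∈ E(G)` with `k < ℓ`, we have
`{v_i, v_ℓ} ∈ E(G)` for all `i < k` and `{v_k, v_j} ∈ E(G)` for all `j ≠ k` with
`j < ℓ`. -/
def IsThresholdOrdered {n : ℕ} (G : SimpleGraph (Fin n)) : Prop :=
  ∀ k l : Fin n, k < l → G.Adj k l →
    (∀ i, i < k → G.Adj i l) ∧ (∀ j, j ≠ k → j < l → G.Adj k j)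

namespace IsThresholdOrdered

variable {n : ℕ} {G : SimpleGraph (Fin n)} {k l : Fin n}

theorem adj_of_lt_of_le (hG : IsThresholdOrdered G) (hkl : k < l) (h : G.Adj k l) {j : Fin n}
    (hkj : k < j) (hjl : j ≤ l) : G.Adj k j := by
  rcases hjl.lt_or_eq with hjl | rfl
  · exact (hG k l hkl h).2 j hkj.ne' hjl
  · exact h

theorem adj_succ_of_lt (hG : IsThresholdOrdered G) (hkl : k < l) (h : G.Adj k l) :
    ∀ i, i < Order.succ k → G.Adj i (Order.succ k) := by
  have hk : ¬IsMax k := not_isMax_of_lt hkl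
  have hks : k < Order.succ k := Order.lt_succ_of_not_isMax hk
  have hadj : G.Adj k (Order.succ k) := hG.adj_of_lt_of_le hkl h hks (Order.succ_le_of_lt hkl)
  intro i hi
  rcases ((Order.lt_succ_iff_of_not_isMax hk).1 hi).lt_or_eq with hik | rfl
  · exact (hG k _ hks hadj).1 i hik
  · exact hadj

end IsThresholdOrdered

theorem threshold_clique_and_independent_general {n : ℕ} (G : SimpleGraph (Fin (n + 1)))
    (hG : IsThresholdOrdered G)
    (t : Fin (n + 1)) (ht : ∀ i, i < t → G.Adj i t)
    (htmax : ∀ s : Fin (n + 1), (∀ i, i < s → G.Adj i s) → s ≤ t) :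
    (∀ i j : Fin (n + 1), i < j → j ≤ t → G.Adj i j) ∧
    (∀ k l : Fin (n + 1), t ≤ k → k < l → ¬ G.Adj k l) := by
  refine ⟨fun i j hij hjt => ?_, fun k l htk hkl hadj => ?_⟩
  · rcases hjt.lt_or_eq with hjt | rfl
    · exact ((hG j t hjt (ht j hjt)).2 i hij.ne (hij.trans hjt)).symm
    · exact ht i hij
  · have hsucc_le : Order.succ k ≤ t := htmax _ (hG.adj_succ_of_lt hkl hadj)
    exact (Order.lt_succ_of_not_isMax (not_isMax_of_lt hkl)).not_ge (hsucc_le.trans htk)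

/-- For a connected threshold graph on vertices `v₁, …, v_{n+1}` (zero-indexed here by
`Fin (n+1)`), with `t` the largest index such that `{v_i, v_t} ∈ E(G)` for all `i < t`,
all pairs of vertices with indices at most `t` are adjacent, and no two vertices with
indices at least `t` are adjacent. -/
theorem threshold_clique_and_independent {n : ℕ} (G : SimpleGraph (Fin (n + 1)))
    [DecidableRel G.Adj] (hG : IsThresholdOrdered G) (hconn : G.Connected)
    (t : Fin (n + 1)) (ht : ∀ i, i < t → G.Adj i t)
    (htmax : ∀ s : Fin (n + 1), (∀ i, i < s → G.Adj i s) → s ≤ t) :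
    (∀ i j : Fin (n + 1), i < j → j ≤ t → G.Adj i j) ∧
    (∀ k l : Fin (n + 1), t ≤ k → k < l → ¬ G.Adj k l) :=
  threshold_clique_and_independent_general G hG t ht htmax
end
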